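/- arXiv:1304.0625 — 2 statements merged into one kernel-verified Lean document; each statement's English description precedes it below -/
import Mathlib

section
/- Let n≥2, 0<α≤1 and q = n/(n−α). Suppose Ω ∈ Din^{n/(n−α)}_α(S^{n-1}). Then there exists a constant C>0, independent of f, such that ‖T_{Ω,α}(f)‖_{WL^{n/(n−α)}} ≤ C‖f‖_{L^1} for every f ∈ L^1(ℝ^n). -/
open MeasureTheory Metric Set Filter SchwartzMap
open scoped ENNReal NNReal Topology

noncomputable section


/-- Euclidean space `ℝ^n`. -/
abbrev Euc (n : ℕ) := EuclideanSpace ℝ (Fin n)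

/-- The unit sphere `S^{n-1}` in `ℝ^n`. -/
def unitSphere (n : ℕ) : Set (Euc n) := Metric.sphere (0 : Euc n) 1

/-- The surface measure `dσ` on the unit sphere: `(n-1)`-dimensional Hausdorff measure. -/
def sphereMeasure (n : ℕ) : Measure (Euc n) := μH[(n : ℝ) - 1]

/-- Condition (1): `Ω(x, λz) = Ω(x, z)` for all `λ > 0`. -/
def Homogeneous (n : ℕ) (Ω : Euc n → Euc n → ℝ) : Prop :=
  ∀ x z : Euc n, ∀ c : ℝ, 0 < c → Ω x (c • z) = Ω x z

/-- Condition (2): `sup_x (∫_{S^{n-1}} |Ω(x,z')|^r dσ(z'))^{1/r} < ∞`. -/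
def SphereLrBound (n : ℕ) (r : ℝ) (Ω : Euc n → Euc n → ℝ) : Prop :=
  (⨆ x : Euc n,
    (∫⁻ z in unitSphere n, ENNReal.ofReal (|Ω x z| ^ r) ∂sphereMeasure n) ^ (1 / r)) < ∞

/-- Condition (2'): `sup_{x, ρ ≥ 0} (∫_{S^{n-1}} |Ω(x+ρz',z')|^r dσ(z'))^{1/r} < ∞`. -/
def SphereLrBound' (n : ℕ) (r : ℝ) (Ω : Euc n → Euc n → ℝ) : Prop :=
  (⨆ x : Euc n, ⨆ ρ : ℝ≥0,
    (∫⁻ z in unitSphere n,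
      ENNReal.ofReal (|Ω (x + (ρ : ℝ) • z) z| ^ r) ∂sphereMeasure n) ^ (1 / r)) < ∞

/-- Condition (3): `∫_{S^{n-1}} Ω(x,z') dσ(z') = 0` for every `x`. -/
def SphereCancel (n : ℕ) (Ω : Euc n → Euc n → ℝ) : Prop :=
  ∀ x : Euc n, ∫ z in unitSphere n, Ω x z ∂sphereMeasure n = 0

/-- The integral modulus of continuity `ω_r(δ)` of order `r` of `Ω`. -/
def omegaMod (n : ℕ) (r : ℝ) (Ω : Euc n → Euc n → ℝ) (δ : ℝ) : ℝ≥0∞ :=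
  ⨆ x : Euc n, ⨆ ρ : ℝ≥0,
    (∫⁻ z in unitSphere n,
      (⨆ y : {y : Euc n // y ∈ unitSphere n ∧ ‖y - z‖ ≤ δ},
        ENNReal.ofReal
          (|Ω (x + (ρ : ℝ) • z) (y : Euc n) - Ω (x + (ρ : ℝ) • z) z| ^ r))
      ∂sphereMeasure n) ^ (1 / r)

/-- The `L^{r,α}`-Dini condition: (1), (2'), (3) together with
`∫_0^1 ω_r(δ)/δ^{1+α} dδ < ∞`.  For `α = 0` this is the `L^r`-Dini condition. -/
def DiniCondition (n : ℕ) (r α : ℝ) (Ω : Euc n → Euc n → ℝ) : Prop :=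
  Homogeneous n Ω ∧ SphereLrBound' n r Ω ∧ SphereCancel n Ω ∧
    (∫⁻ δ in Set.Ioo (0 : ℝ) 1, omegaMod n r Ω δ / ENNReal.ofReal (δ ^ (1 + α))) < ∞

/-- The class `Din^r_β(S^{n-1})`: all `Ω` satisfying the `L^{r,γ}`-Dini condition for every
`0 < γ < β`. -/
def DinClass (n : ℕ) (r β : ℝ) (Ω : Euc n → Euc n → ℝ) : Prop :=
  ∀ γ : ℝ, 0 < γ → γ < β → DiniCondition n r γ Ω

/-- The kernel `K_α(x,z) = Ω(x, z/|z|) / |z|^{n-α}`; `α = 0` gives `K(x,z)`. -/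
def Kker (n : ℕ) (α : ℝ) (Ω : Euc n → Euc n → ℝ) (x z : Euc n) : ℝ :=
  Ω x (‖z‖⁻¹ • z) / ‖z‖ ^ ((n : ℝ) - α)

/-- The singular integral operator with variable kernel,
`T_Ω f(x) = p.v. ∫ K(x, x-y) f(y) dy`, as a principal value. -/
def TOmega (n : ℕ) (Ω : Euc n → Euc n → ℝ) (f : Euc n → ℝ) (x : Euc n) : ℝ :=
  limUnder (𝓝[>] (0 : ℝ))
    (fun ε => ∫ y in {y : Euc n | ε ≤ ‖x - y‖}, Kker n 0 Ω x (x - y) * f y)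

/-- The fractional integral operator with variable kernel,
`T_{Ω,α} f(x) = ∫ K_α(x, x-y) f(y) dy`. -/
def TOmegaAlpha (n : ℕ) (α : ℝ) (Ω : Euc n → Euc n → ℝ) (f : Euc n → ℝ) (x : Euc n) : ℝ :=
  ∫ y, Kker n α Ω x (x - y) * f y

/-- The weak `L^p` quasinorm `‖f‖_{WL^p} = sup_{λ>0} λ |{|f| > λ}|^{1/p}`. -/
def wnorm (n : ℕ) (p : ℝ) (f : Euc n → ℝ) : ℝ≥0∞ :=
  ⨆ c : ℝ≥0, (c : ℝ≥0∞) * (volume {x : Euc n | (c : ℝ) < |f x|}) ^ (1 / p)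

/-- The weak `L^p` quasinorm for an `ℝ≥0∞`-valued function. -/
def wnormE (n : ℕ) (p : ℝ) (g : Euc n → ℝ≥0∞) : ℝ≥0∞ :=
  ⨆ c : ℝ≥0, (c : ℝ≥0∞) * (volume {x : Euc n | (c : ℝ≥0∞) < g x}) ^ (1 / p)

/-- The test class `𝒜_N` of Schwartz functions `φ` with
`(1+|x|)^{N+n+1} |D^γ φ(x)| ≤ 1` for all `x` and all multi-indices `|γ| ≤ N+1`
(mixed partial derivatives realised via the iterated Fréchet derivative applied to
coordinate basis vectors). -/
def calA (n N : ℕ) : Set (SchwartzMap (Euc n) ℝ) :=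
  {φ | ∀ x : Euc n, ∀ k : ℕ, k ≤ N + 1 → ∀ m : Fin k → Fin n,
    (1 + ‖x‖) ^ (N + n + 1) *
      |iteratedFDeriv ℝ k (φ : Euc n → ℝ) x (fun i => EuclideanSpace.single (m i) (1 : ℝ))|
      ≤ 1}

/-- The integer `N = [n(1/p-1)]`. -/
def Npar (n : ℕ) (p : ℝ) : ℕ := ⌊(n : ℝ) * (1 / p - 1)⌋₊

/-- The grand maximal function of a locally integrable function `f`:
`Gf(x) = sup_{φ ∈ 𝒜_N} sup_{t>0, |y-x|<t} |(φ_t * f)(y)|`. -/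
def grandMaximalF (n : ℕ) (p : ℝ) (f : Euc n → ℝ) (x : Euc n) : ℝ≥0∞ :=
  ⨆ φ ∈ calA n (Npar n p), ⨆ t : {t : ℝ // 0 < t}, ⨆ y : {y : Euc n // dist y x < t},
    ENNReal.ofReal
      |∫ z, ((t : ℝ) ^ (n : ℕ))⁻¹ * φ ((t : ℝ)⁻¹ • ((y : Euc n) - z)) * f z|

/-- The weak Hardy space quasinorm of a function, `‖f‖_{WH^p} = ‖Gf‖_{WL^p}`. -/
def whnormF (n : ℕ) (p : ℝ) (f : Euc n → ℝ) : ℝ≥0∞ :=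
  wnormE n p (grandMaximalF n p f)

/-- A cube `Q(c, r)` in `ℝ^n` centered at `c` with side length `r`. -/
def cube (n : ℕ) (c : Euc n) (r : ℝ) : Set (Euc n) :=
  {y : Euc n | ∀ j : Fin n, |y j - c j| ≤ r / 2}


/-! The Dini condition forces `Ω` to be bounded. Given `x` and a point `w` of the sphere, the cap
of radius `δ/2` around `w` has surface measure bounded below independently of `w`, so the uniform
`L^r` bound (2') yields a point `z₀` of the cap where `|Ω(x, z₀)|` is small, and `ω_r(δ) < ∞`
yields a point `z₁` of the cap where the oscillation of `Ω(x, ·)` on the `δ`-ball around `z₁` is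
small; both `z₀` and `w` lie in that ball. Hence `|T_{Ω,α} f| ≤ M · I_α |f|` with the Riesz
potential `I_α`, and `I_α` is of weak type `(1, n/(n-α))`: cut its kernel at a radius `R`, bound
the tail by `R^(α-n) ‖f‖₁`, bound the `L¹` norm of the truncated part by `C R^α ‖f‖₁`, and apply
Chebyshev's inequality with `R` chosen so that the tail is `λ/2`. -/

open Module

theorem exists_lt_of_setLIntegral_le {X : Type*} [MeasurableSpace X] {μ : Measure X}
    {K : Set X} (hK : MeasurableSet K) {F : X → ℝ≥0∞} {C b : ℝ≥0∞}
    (hF : ∫⁻ z in K, F z ∂μ ≤ C) (hb : C < b * μ K) : ∃ z ∈ K, F z < b := by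
  by_contra! h
  have : b * μ K ≤ ∫⁻ z in K, F z ∂μ := by
    rw [← setLIntegral_const]
    exact setLIntegral_mono' hK h
  exact (hb.trans_le (this.trans hF)).false

theorem exists_lt_top_of_setLIntegral_div_lt_top {X : Type*} [MeasurableSpace X]
    {μ : Measure X} {s : Set X} (hs : MeasurableSet s) (hs0 : μ s ≠ 0) {f w : X → ℝ≥0∞}
    (hw : ∀ a ∈ s, w a ≠ ∞) (h : ∫⁻ a in s, f a / w a ∂μ < ∞) : ∃ a ∈ s, f a < ∞ := by
  by_contra! hf
  have htop : ∫⁻ a in s, f a / w a ∂μ = ∫⁻ _ in s, ∞ ∂μ :=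
    setLIntegral_congr_fun hs fun a ha => by
      rw [top_le_iff.1 (hf a ha), ENNReal.top_div_of_ne_top (hw a ha)]
  rw [htop, setLIntegral_const, ENNReal.top_mul hs0] at h
  exact h.false

theorem lintegral_lintegral_sub_mul {G : Type*} [MeasurableSpace G] [AddGroup G]
    [MeasurableAdd G] [MeasurableSub₂ G] {μ : Measure G} [SFinite μ] [μ.IsAddRightInvariant]
    {φ g : G → ℝ≥0∞} (hφ : Measurable φ) (hg : AEMeasurable g μ) :
    ∫⁻ x, ∫⁻ y, φ (x - y) * g y ∂μ ∂μ = (∫⁻ z, φ z ∂μ) * ∫⁻ y, g y ∂μ := by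
  rw [lintegral_lintegral_swap ((hφ.comp measurable_sub).aemeasurable.mul hg.comp_snd)]
  have hinner (y : G) : ∫⁻ x, φ (x - y) * g y ∂μ = (∫⁻ z, φ z ∂μ) * g y := by
    rw [lintegral_mul_const (f := fun x => φ (x - y)) _ (hφ.comp (measurable_sub_const y)),
      lintegral_sub_right_eq_self]
  rw [lintegral_congr hinner, lintegral_const_mul'' _ hg]

section RieszPotential

variable {E : Type*} [NormedAddCommGroup E] [NormedSpace ℝ E]

def rieszKernel (α : ℝ) (z : E) : ℝ≥0∞ := ENNReal.ofReal (‖z‖ ^ (α - finrank ℝ E))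

theorem rieszKernel_le_indicator_add {α R : ℝ} (hα : α ≤ finrank ℝ E) (hR : 0 < R) (z : E) :
    rieszKernel α z
      ≤ (ball 0 R).indicator (rieszKernel α) z + ENNReal.ofReal (R ^ (α - finrank ℝ E)) := by
  by_cases hz : z ∈ ball 0 R
  · rw [indicator_of_mem hz]
    exact le_self_add
  · rw [indicator_of_notMem hz, zero_add]
    exact ENNReal.ofReal_le_ofReal
      (Real.rpow_le_rpow_of_nonpos hR (by simpa using hz) (sub_nonpos.2 hα))

variable [MeasurableSpace E]

def rieszPotential (μ : Measure E) (α : ℝ) (g : E → ℝ≥0∞) (x : E) : ℝ≥0∞ :=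
  ∫⁻ y, rieszKernel α (x - y) * g y ∂μ

theorem rieszPotential_le_lintegral_indicator_add (μ : Measure E) {α R : ℝ}
    (hα : α ≤ finrank ℝ E) (hR : 0 < R) {g : E → ℝ≥0∞} (hg : AEMeasurable g μ) (x : E) :
    rieszPotential μ α g x ≤ ∫⁻ y, (ball 0 R).indicator (rieszKernel α) (x - y) * g y ∂μ
      + ENNReal.ofReal (R ^ (α - finrank ℝ E)) * ∫⁻ y, g y ∂μ := by
  calc rieszPotential μ α g x
      ≤ ∫⁻ y, ((ball 0 R).indicator (rieszKernel α) (x - y) * g y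
          + ENNReal.ofReal (R ^ (α - finrank ℝ E)) * g y) ∂μ :=
        lintegral_mono fun y => by
          rw [← add_mul]
          gcongr
          exact rieszKernel_le_indicator_add hα hR _
    _ = _ := by rw [lintegral_add_right' _ (hg.const_mul _), lintegral_const_mul'' _ hg]

variable [BorelSpace E]

theorem measurable_rieszKernel (α : ℝ) : Measurable (rieszKernel (E := E) α) :=
  (measurable_norm.pow_const _).ennreal_ofReal

variable [FiniteDimensional ℝ E] (μ : Measure E) [μ.IsAddHaarMeasure]

theorem lintegral_rieszKernel_ball {α R : ℝ} (hR : 0 < R) :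
    ∫⁻ z in ball 0 R, rieszKernel α z ∂μ
      = ENNReal.ofReal (R ^ α) * ∫⁻ z in ball 0 1, rieszKernel α z ∂μ := by
  have hscale (w : E) : (ball (0 : E) R).indicator (rieszKernel α) (R • w)
      = ENNReal.ofReal (R ^ (α - finrank ℝ E)) * (ball (0 : E) 1).indicator (rieszKernel α) w := by
    have hmem : R • w ∈ ball (0 : E) R ↔ w ∈ ball (0 : E) 1 := by
      simp [norm_smul, abs_of_pos hR, hR]
    by_cases hw : w ∈ ball (0 : E) 1
    · rw [indicator_of_mem (hmem.2 hw), indicator_of_mem hw, rieszKernel, rieszKernel,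
        norm_smul, Real.norm_of_nonneg hR.le, Real.mul_rpow hR.le (norm_nonneg _),
        ENNReal.ofReal_mul (by positivity)]
    · rw [indicator_of_notMem (mt hmem.1 hw), indicator_of_notMem hw, mul_zero]
  have key := lintegral_map
    ((measurable_rieszKernel α).indicator (measurableSet_ball (x := (0 : E)) (ε := R)))
    (measurable_const_smul R) (μ := μ)
  rw [μ.map_addHaar_smul hR.ne', lintegral_smul_measure, lintegral_congr hscale,
    lintegral_const_mul _ ((measurable_rieszKernel α).indicator measurableSet_ball),
    lintegral_indicator measurableSet_ball, lintegral_indicator measurableSet_ball] at key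
  have hRd : 0 < R ^ finrank ℝ E := pow_pos hR _
  calc ∫⁻ z in ball 0 R, rieszKernel α z ∂μ
      = ENNReal.ofReal (R ^ finrank ℝ E) *
          (ENNReal.ofReal |(R ^ finrank ℝ E)⁻¹| • ∫⁻ z in ball 0 R, rieszKernel α z ∂μ) := by
        rw [smul_eq_mul, ← mul_assoc, ← ENNReal.ofReal_mul hRd.le, abs_of_pos (inv_pos.2 hRd),
          mul_inv_cancel₀ hRd.ne', ENNReal.ofReal_one, one_mul]
    _ = ENNReal.ofReal (R ^ α) * ∫⁻ z in ball 0 1, rieszKernel α z ∂μ := by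
        rw [key, ← mul_assoc, ← ENNReal.ofReal_mul hRd.le, ← Real.rpow_natCast,
          ← Real.rpow_add hR, add_sub_cancel]

theorem lintegral_rieszKernel_ball_one_lt_top {α : ℝ} (hα : 0 < α) (hαd : α < finrank ℝ E) :
    ∫⁻ z in ball 0 1, rieszKernel α z ∂μ < ∞ := by
  have hd : 1 ≤ finrank ℝ E := by
    have : (0 : ℝ) < finrank ℝ E := hα.trans hαd
    exact_mod_cast this
  have hint : IntegrableOn (fun z : E => ‖z‖ ^ (α - finrank ℝ E)) (ball 0 1) μ :=
    integrableOn_ball_of_norm_le_rpow (C := 1) (α := finrank ℝ E - α) hd (by linarith)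
      (.of_forall fun z => by simp [abs_of_nonneg (Real.rpow_nonneg (norm_nonneg z) _)])
      (measurable_norm.pow_const _).aestronglyMeasurable
  exact hint.lintegral_lt_top

theorem lintegral_lintegral_indicator_rieszKernel_mul {α R : ℝ} (hR : 0 < R) {g : E → ℝ≥0∞}
    (hg : AEMeasurable g μ) :
    ∫⁻ x, ∫⁻ y, (ball 0 R).indicator (rieszKernel α) (x - y) * g y ∂μ ∂μ
      = ENNReal.ofReal (R ^ α) * (∫⁻ z in ball 0 1, rieszKernel α z ∂μ) * ∫⁻ y, g y ∂μ := by
  rw [lintegral_lintegral_sub_mul ((measurable_rieszKernel α).indicator measurableSet_ball) hg,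
    lintegral_indicator measurableSet_ball, lintegral_rieszKernel_ball μ hR]

theorem measure_lt_rieszPotential_le {α R : ℝ} (hα : α ≤ finrank ℝ E) (hR : 0 < R)
    {g : E → ℝ≥0∞} (hg : AEMeasurable g μ) {c : ℝ≥0∞} (hc0 : c ≠ 0) (hc : c ≠ ∞)
    (htail : ENNReal.ofReal (R ^ (α - finrank ℝ E)) * ∫⁻ y, g y ∂μ ≤ c / 2) :
    μ {x | c < rieszPotential μ α g x}
      ≤ ENNReal.ofReal (R ^ α) * (∫⁻ z in ball 0 1, rieszKernel α z ∂μ) * (∫⁻ y, g y ∂μ)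
          / (c / 2) := by
  set J := fun x => ∫⁻ y, (ball 0 R).indicator (rieszKernel α) (x - y) * g y ∂μ
  have hJ : AEMeasurable J μ := AEMeasurable.lintegral_prod_right'
    ((((measurable_rieszKernel α).indicator measurableSet_ball).comp
      measurable_sub).aemeasurable.mul hg.comp_snd)
  have hsub : {x | c < rieszPotential μ α g x} ⊆ {x | c / 2 ≤ J x} := fun x hx => by
    by_contra hJx
    have := (rieszPotential_le_lintegral_indicator_add μ hα hR hg x).trans
      (add_le_add (not_le.1 hJx).le htail)
    rw [ENNReal.add_halves] at this
    exact not_le.2 hx this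
  calc μ {x | c < rieszPotential μ α g x} ≤ μ {x | c / 2 ≤ J x} := measure_mono hsub
    _ ≤ (∫⁻ x, J x ∂μ) / (c / 2) :=
        meas_ge_le_lintegral_div hJ (ENNReal.half_pos hc0).ne' (ENNReal.div_ne_top hc two_ne_zero)
    _ = _ := by rw [lintegral_lintegral_indicator_rieszKernel_mul μ hR hg]

theorem measure_lt_rieszPotential_le_rpow {α : ℝ} (hαd : α < finrank ℝ E) {g : E → ℝ≥0∞}
    (hg : AEMeasurable g μ) {c l : ℝ} (hc : 0 < c) (hl : 0 < l)
    (hgl : ∫⁻ y, g y ∂μ = ENNReal.ofReal l) :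
    μ {x | ENNReal.ofReal c < rieszPotential μ α g x}
      ≤ (∫⁻ z in ball 0 1, rieszKernel α z ∂μ)
          * ENNReal.ofReal ((2 * l / c) ^ ((finrank ℝ E : ℝ) / (finrank ℝ E - α))) := by
  set d : ℝ := (finrank ℝ E : ℝ)
  have hdα : 0 < d - α := sub_pos.2 hαd
  -- `R` is the radius at which the tail of the kernel contributes exactly `c / 2`
  set t := 2 * l / c
  have ht : 0 < t := by positivity
  set R := t ^ (1 / (d - α))
  have hR : 0 < R := Real.rpow_pos_of_pos ht _
  have hRtail : R ^ (α - d) = t⁻¹ := by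
    rw [← Real.rpow_mul ht.le, show 1 / (d - α) * (α - d) = -1 by field_simp; ring,
      Real.rpow_neg_one]
  have hRα : R ^ α * t = t ^ (d / (d - α)) := by
    rw [← Real.rpow_mul ht.le, ← Real.rpow_add_one ht.ne']
    congr 1
    field_simp
    ring
  have hc2 : ENNReal.ofReal c / 2 = ENNReal.ofReal (c / 2) := by
    rw [ENNReal.ofReal_div_of_pos two_pos, ENNReal.ofReal_ofNat]
  refine (measure_lt_rieszPotential_le μ hαd.le hR hg
    (ENNReal.ofReal_pos.2 hc).ne' ENNReal.ofReal_ne_top ?_).trans (le_of_eq ?_)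
  · rw [hRtail, hgl, ← ENNReal.ofReal_mul (by positivity), hc2]
    exact ENNReal.ofReal_le_ofReal (by simp only [t]; field_simp; rfl)
  · rw [hgl, hc2, ← hRα, mul_right_comm, mul_comm _ (∫⁻ z in ball 0 1, rieszKernel α z ∂μ),
      mul_div_assoc, ← ENNReal.ofReal_mul (by positivity),
      ← ENNReal.ofReal_div_of_pos (by positivity)]
    congr 2
    simp only [t]
    field_simp

theorem rieszPotential_weakType {α : ℝ} (hα : 0 < α) (hαd : α < finrank ℝ E) :
    ∃ C : ℝ≥0∞, C ≠ ∞ ∧ ∀ g : E → ℝ≥0∞, AEMeasurable g μ → ∫⁻ y, g y ∂μ ≠ ∞ → ∀ c : ℝ≥0,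
      (c : ℝ≥0∞) * μ {x | (c : ℝ≥0∞) < rieszPotential μ α g x}
          ^ (1 / ((finrank ℝ E : ℝ) / (finrank ℝ E - α)))
        ≤ C * ∫⁻ y, g y ∂μ := by
  set q : ℝ := (finrank ℝ E : ℝ) / (finrank ℝ E - α)
  have hq : 0 < q := div_pos (hα.trans hαd) (sub_pos.2 hαd)
  set Ξ := ∫⁻ z in ball 0 1, rieszKernel α z ∂μ
  have hΞ : Ξ ≠ ∞ := (lintegral_rieszKernel_ball_one_lt_top μ hα hαd).ne
  refine ⟨2 * Ξ ^ (1 / q),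
    ENNReal.mul_ne_top (by simp) (ENNReal.rpow_ne_top_of_nonneg (by positivity) hΞ),
    fun g hg hL c => ?_⟩
  rcases eq_or_ne c 0 with rfl | hc0
  · simp
  have hc : (0 : ℝ) < c := NNReal.coe_pos.2 (pos_iff_ne_zero.2 hc0)
  rw [← ENNReal.ofReal_coe_nnreal]
  rcases eq_or_ne (∫⁻ y, g y ∂μ) 0 with hL0 | hL0
  · have h := measure_lt_rieszPotential_le μ hαd.le one_pos hg (ENNReal.ofReal_pos.2 hc).ne'
      ENNReal.ofReal_ne_top (by simp [hL0])
    rw [hL0, mul_zero, ENNReal.zero_div, nonpos_iff_eq_zero] at h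
    rw [h, ENNReal.zero_rpow_of_pos (one_div_pos.2 hq), mul_zero]
    exact zero_le
  set l := (∫⁻ y, g y ∂μ).toReal
  have hl : 0 < l := ENNReal.toReal_pos hL0 hL
  have hLl : ∫⁻ y, g y ∂μ = ENNReal.ofReal l := (ENNReal.ofReal_toReal hL).symm
  have ht : 0 < 2 * l / c := by positivity
  calc ENNReal.ofReal c * μ {x | ENNReal.ofReal c < rieszPotential μ α g x} ^ (1 / q)
      ≤ ENNReal.ofReal c * (Ξ * ENNReal.ofReal ((2 * l / c) ^ q)) ^ (1 / q) := by
        gcongr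
        exact measure_lt_rieszPotential_le_rpow μ hαd hg hc hl hLl
    _ = 2 * Ξ ^ (1 / q) * ∫⁻ y, g y ∂μ := by
      rw [ENNReal.mul_rpow_of_nonneg _ _ (by positivity),
        ENNReal.ofReal_rpow_of_nonneg (by positivity) (by positivity), ← Real.rpow_mul ht.le,
        mul_one_div_cancel hq.ne', Real.rpow_one, hLl, mul_left_comm,
        ← ENNReal.ofReal_mul hc.le, mul_comm (2 : ℝ≥0∞), mul_assoc,
        ← ENNReal.ofReal_ofNat 2, ← ENNReal.ofReal_mul zero_le_two]
      congr 2
      field_simp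

end RieszPotential

theorem hausdorffMeasure_finrank_ball_pos {F : Type*} [NormedAddCommGroup F] [NormedSpace ℝ F]
    [FiniteDimensional ℝ F] [MeasurableSpace F] [BorelSpace F] (x : F) {r : ℝ} (hr : 0 < r) :
    0 < μH[(finrank ℝ F : ℝ)] (ball x r) := by
  have hE : 0 < μHE[finrank ℝ F] (ball x r) := measure_ball_pos _ x hr
  rw [Measure.euclideanHausdorffMeasure_def, Measure.smul_apply] at hE
  exact pos_iff_ne_zero.2 fun h => by simp [h] at hE

section SphericalCap

variable {E : Type*} [NormedAddCommGroup E] [InnerProductSpace ℝ E]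

theorem ball_subset_orthogonalProjection_image_sphere_inter_closedBall {e : E} (he : ‖e‖ = 1)
    {δ : ℝ} (hδ : 0 < δ) :
    ball (0 : (ℝ ∙ e)ᗮ) (min 1 (δ / 2))
      ⊆ (ℝ ∙ e)ᗮ.orthogonalProjectionOnto '' (sphere 0 1 ∩ closedBall e δ) := by
  intro u hu
  have hu1 : ‖u‖ < 1 := (mem_ball_zero_iff.1 hu).trans_le (min_le_left _ _)
  have huδ : ‖u‖ < δ / 2 := (mem_ball_zero_iff.1 hu).trans_le (min_le_right _ _)
  have hue : inner ℝ (u : E) e = 0 :=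
    real_inner_comm e u ▸ Submodule.mem_orthogonal_singleton_iff_inner_right.1 u.2
  have hnorm (a : ℝ) : ‖(u : E) + a • e‖ ^ 2 = ‖u‖ ^ 2 + a ^ 2 := by
    rw [sq, sq, sq,
      norm_add_sq_eq_norm_sq_add_norm_sq_real (by simp [real_inner_smul_right, hue]),
      norm_smul, he, Real.norm_eq_abs, mul_one, abs_mul_abs_self, Submodule.coe_norm]
  set c := √(1 - ‖u‖ ^ 2)
  have hc : c ^ 2 = 1 - ‖u‖ ^ 2 := Real.sq_sqrt (by nlinarith [norm_nonneg u])
  have hc0 : 0 ≤ c := Real.sqrt_nonneg _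
  have hc1 : c ≤ 1 := Real.sqrt_le_one.2 (by nlinarith [norm_nonneg u])
  refine ⟨(u : E) + c • e, ⟨?_, ?_⟩, ?_⟩
  · rw [mem_sphere_zero_iff_norm, ← sq_eq_sq₀ (norm_nonneg _) zero_le_one, hnorm, hc]
    ring
  · rw [mem_closedBall, dist_eq_norm, add_sub_assoc,
      show c • e - e = (c - 1) • e by rw [sub_smul, one_smul],
      ← sq_le_sq₀ (norm_nonneg _) hδ.le, hnorm]
    nlinarith [norm_nonneg u]
  · have hPe : (ℝ ∙ e)ᗮ.orthogonalProjectionOnto e = 0 :=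
      Submodule.orthogonalProjectionOnto_eq_zero_iff.2
        (Submodule.le_orthogonal_orthogonal _ (Submodule.mem_span_singleton_self e))
    simp [hPe]

variable [MeasurableSpace E] [BorelSpace E]

theorem hausdorffMeasure_sphere_inter_closedBall_congr {s r δ : ℝ} {v w : E}
    (hvw : ‖v‖ = ‖w‖) :
    μH[s] (sphere 0 r ∩ closedBall v δ) = μH[s] (sphere 0 r ∩ closedBall w δ) := by
  let ρ := (Submodule.reflection (ℝ ∙ (v - w))ᗮ).toIsometryEquiv
  have hρ : ρ v = w := Submodule.reflection_sub hvw
  rw [← ρ.hausdorffMeasure_image, Set.image_inter ρ.injective, ρ.image_sphere,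
    ρ.image_closedBall, hρ]
  simp [ρ]

theorem hausdorffMeasure_sphere_inter_closedBall_pos [FiniteDimensional ℝ E] {e : E}
    (he : ‖e‖ = 1) {δ : ℝ} (hδ : 0 < δ) :
    0 < μH[((finrank ℝ E - 1 : ℕ) : ℝ)] (sphere 0 1 ∩ closedBall e δ) := by
  have hK : finrank ℝ (ℝ ∙ e)ᗮ = finrank ℝ E - 1 := by
    have := Submodule.finrank_add_finrank_orthogonal (ℝ ∙ e)
    rw [finrank_span_singleton (norm_ne_zero_iff.1 (he ▸ one_ne_zero))] at this
    omega
  have hpos := (hausdorffMeasure_finrank_ball_pos 0 (lt_min one_pos (half_pos hδ))).trans_le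
    ((measure_mono (ball_subset_orthogonalProjection_image_sphere_inter_closedBall he hδ)).trans
      ((ℝ ∙ e)ᗮ.orthogonalProjectionOnto.lipschitz.hausdorffMeasure_image_le
        (Nat.cast_nonneg _) _))
  rw [hK] at hpos
  exact pos_iff_ne_zero.2 fun h => by simp [h] at hpos

end SphericalCap

theorem exists_abs_le_of_lintegral_rpow_le {E : Type*} [NormedAddCommGroup E]
    [MeasurableSpace E] [OpensMeasurableSpace E] {σ : Measure E} {S : Set E}
    (hS : MeasurableSet S) {q δ : ℝ} (hq : 0 < q) {m₀ A W : ℝ≥0∞} (hm₀ : m₀ ≠ 0)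
    (hcap : ∀ w ∈ S, m₀ ≤ σ (S ∩ closedBall w (δ / 2))) (hA : A ≠ ∞) (hW : W ≠ ∞) :
    ∃ M : ℝ, ∀ h : E → ℝ,
      ∫⁻ z in S, ENNReal.ofReal (|h z| ^ q) ∂σ ≤ A →
      ∫⁻ z in S, (⨆ y : {y : E // y ∈ S ∧ ‖y - z‖ ≤ δ}, ENNReal.ofReal (|h y - h z| ^ q)) ∂σ
        ≤ W →
      ∀ w ∈ S, |h w| ≤ M := by
  have hlarge : Tendsto (fun M : ℝ => ENNReal.ofReal (M ^ q) * m₀) atTop (𝓝 ∞) := by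
    simpa [ENNReal.top_mul hm₀] using ENNReal.Tendsto.mul_const (b := m₀)
      (ENNReal.tendsto_ofReal_atTop.comp (tendsto_rpow_atTop hq)) (Or.inl ENNReal.top_ne_zero)
  obtain ⟨M, hM0, hMA, hMW⟩ := ((eventually_ge_atTop 0).and
    ((hlarge.eventually (eventually_gt_nhds hA.lt_top)).and
      (hlarge.eventually (eventually_gt_nhds hW.lt_top)))).exists
  have hlt {a : ℝ} (ha : 0 ≤ a) (h : ENNReal.ofReal (a ^ q) < ENNReal.ofReal (M ^ q)) : a < M :=
    (Real.rpow_lt_rpow_iff ha hM0 hq).1 (ENNReal.ofReal_lt_ofReal_iff'.1 h).1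
  refine ⟨3 * M, fun h hhA hhW w hw => ?_⟩
  set K := S ∩ closedBall w (δ / 2)
  have hKm : MeasurableSet K := hS.inter measurableSet_closedBall
  have hKS : ∀ {F : E → ℝ≥0∞}, ∫⁻ z in K, F z ∂σ ≤ ∫⁻ z in S, F z ∂σ :=
    lintegral_mono_set inter_subset_left
  obtain ⟨z₀, hz₀, hhz₀⟩ := exists_lt_of_setLIntegral_le hKm (hKS.trans hhA)
    (hMA.trans_le (by gcongr; exact hcap w hw))
  obtain ⟨z₁, hz₁, hhz₁⟩ := exists_lt_of_setLIntegral_le hKm (hKS.trans hhW)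
    (hMW.trans_le (by gcongr; exact hcap w hw))
  have hosc {y : E} (hy : y ∈ S) (hyz : ‖y - z₁‖ ≤ δ) : |h y - h z₁| < M :=
    hlt (abs_nonneg _) ((le_iSup (fun y : {y : E // y ∈ S ∧ ‖y - z₁‖ ≤ δ} =>
      ENNReal.ofReal (|h y - h z₁| ^ q)) ⟨y, hy, hyz⟩).trans_lt hhz₁)
  have hz₀w := mem_closedBall.1 hz₀.2
  have hz₁w := mem_closedBall.1 hz₁.2
  have h₀ := hlt (abs_nonneg _) hhz₀
  have h₀₁ := hosc hz₀.1 (by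
    rw [← dist_eq_norm]
    linarith [dist_triangle z₀ w z₁, dist_comm w z₁])
  have h₁ := hosc hw (by
    rw [← dist_eq_norm, dist_comm]
    linarith [dist_nonneg (x := z₀) (y := w)])
  calc |h w| ≤ |h z₀| + |h z₀ - h z₁| + |h w - h z₁| := by
        linarith [abs_sub_abs_le_abs_sub (h w) (h z₁), abs_sub_abs_le_abs_sub (h z₁) (h z₀),
          abs_sub_comm (h z₀) (h z₁)]
    _ ≤ 3 * M := by linarith

theorem exists_abs_le_of_diniCondition {n : ℕ} (hn : 1 ≤ n) {r γ : ℝ} (hr : 0 < r)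
    {Ω : Euc n → Euc n → ℝ} (hΩ : DiniCondition n r γ Ω) :
    ∃ M : ℝ, ∀ x, ∀ w ∈ unitSphere n, |Ω x w| ≤ M := by
  obtain ⟨-, hLr, -, hDini⟩ := hΩ
  obtain ⟨δ, hδ, hω⟩ := exists_lt_top_of_setLIntegral_div_lt_top measurableSet_Ioo
    (by simp) (fun _ _ => ENNReal.ofReal_ne_top) hDini
  obtain ⟨e, he⟩ : ∃ e : Euc n, ‖e‖ = 1 := ⟨EuclideanSpace.single ⟨0, hn⟩ 1, by simp⟩
  have hpos := hausdorffMeasure_sphere_inter_closedBall_pos he (half_pos hδ.1)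
  rw [finrank_euclideanSpace_fin, Nat.cast_sub hn, Nat.cast_one] at hpos
  have hcap : ∀ w ∈ unitSphere n, sphereMeasure n (unitSphere n ∩ closedBall e (δ / 2))
      ≤ sphereMeasure n (unitSphere n ∩ closedBall w (δ / 2)) := fun w hw =>
    (hausdorffMeasure_sphere_inter_closedBall_congr
      (by rw [he, ← mem_sphere_zero_iff_norm.1 hw])).le
  obtain ⟨M, hM⟩ := exists_abs_le_of_lintegral_rpow_le (S := unitSphere n)
    isClosed_sphere.measurableSet hr hpos.ne' hcap
    (ENNReal.rpow_ne_top_of_nonneg hr.le hLr.ne) (ENNReal.rpow_ne_top_of_nonneg hr.le hω.ne)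
  refine ⟨M, fun x => hM (Ω x) ?_ ?_⟩
  · rw [← ENNReal.rpow_inv_le_iff hr, ← one_div]
    simpa using le_iSup₂ (f := fun (x : Euc n) (ρ : ℝ≥0) => (∫⁻ z in unitSphere n,
      ENNReal.ofReal (|Ω (x + (ρ : ℝ) • z) z| ^ r) ∂sphereMeasure n) ^ (1 / r)) x 0
  · rw [← ENNReal.rpow_inv_le_iff hr, ← one_div]
    simpa [omegaMod] using le_iSup₂ (f := fun (x : Euc n) (ρ : ℝ≥0) => (∫⁻ z in unitSphere n,
      (⨆ y : {y : Euc n // y ∈ unitSphere n ∧ ‖y - z‖ ≤ δ},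
        ENNReal.ofReal (|Ω (x + (ρ : ℝ) • z) y - Ω (x + (ρ : ℝ) • z) z| ^ r))
      ∂sphereMeasure n) ^ (1 / r)) x 0

theorem enorm_kker_le {n : ℕ} {α M : ℝ} (hα : α ≠ n) {Ω : Euc n → Euc n → ℝ}
    (hM : ∀ x, ∀ w ∈ unitSphere n, |Ω x w| ≤ M) (x z : Euc n) :
    ‖Kker n α Ω x z‖ₑ ≤ ENNReal.ofReal M * rieszKernel α z := by
  rcases eq_or_ne z 0 with rfl | hz
  · simp [Kker, Real.zero_rpow (sub_ne_zero.2 hα.symm)]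
  have hz0 : 0 < ‖z‖ := norm_pos_iff.2 hz
  have hw : ‖z‖⁻¹ • z ∈ unitSphere n := by
    rw [unitSphere, mem_sphere_zero_iff_norm, norm_smul, norm_inv, norm_norm,
      inv_mul_cancel₀ hz0.ne']
  rw [Real.enorm_eq_ofReal_abs, rieszKernel, finrank_euclideanSpace_fin,
    ← ENNReal.ofReal_mul' (Real.rpow_nonneg (norm_nonneg z) _)]
  refine ENNReal.ofReal_le_ofReal ?_
  rw [Kker, abs_div, abs_of_pos (Real.rpow_pos_of_pos hz0 _), div_eq_mul_inv,
    ← Real.rpow_neg hz0.le, neg_sub]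
  exact mul_le_mul_of_nonneg_right (hM x _ hw) (Real.rpow_nonneg hz0.le _)

theorem enorm_tOmegaAlpha_le {n : ℕ} {α M : ℝ} (hα : α ≠ n) {Ω : Euc n → Euc n → ℝ}
    (hM : ∀ x, ∀ w ∈ unitSphere n, |Ω x w| ≤ M) (f : Euc n → ℝ) (x : Euc n) :
    ‖TOmegaAlpha n α Ω f x‖ₑ
      ≤ rieszPotential volume α (fun y => ENNReal.ofReal M * ‖f y‖ₑ) x := by
  refine (enorm_integral_le_lintegral_enorm _).trans (lintegral_mono fun y => ?_)
  rw [enorm_mul, mul_left_comm, ← mul_assoc]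
  gcongr
  exact enorm_kker_le hα hM x (x - y)

theorem wnorm_le_wnormE {n : ℕ} {p : ℝ} (hp : 0 ≤ p) {F : Euc n → ℝ} {G : Euc n → ℝ≥0∞}
    (h : ∀ x, ‖F x‖ₑ ≤ G x) : wnorm n p F ≤ wnormE n p G := by
  refine iSup_mono fun c => ?_
  gcongr with x
  refine fun hx => lt_of_lt_of_le ?_ (h x)
  rw [Real.enorm_eq_ofReal_abs, ← ENNReal.ofReal_coe_nnreal]
  exact (ENNReal.ofReal_lt_ofReal_iff_of_nonneg c.2).2 hx

/-- **Corollary 6.2.** Let `n ≥ 2`, `0 < α ≤ 1` and `q = n/(n-α)`. Suppose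
`Ω ∈ Din^{n/(n-α)}_α(S^{n-1})`. Then `‖T_{Ω,α} f‖_{WL^{n/(n-α)}} ≤ C ‖f‖_{L^1}` for all
`f ∈ L^1(ℝ^n)`. -/
theorem fractional_integral_weak_type
    (n : ℕ) (hn : 2 ≤ n) (α q : ℝ) (hα0 : 0 < α) (hα1 : α ≤ 1)
    (hq : q = (n : ℝ) / ((n : ℝ) - α))
    (Ω : Euc n → Euc n → ℝ) (hΩ : DinClass n q α Ω) :
    ∃ C : ℝ, 0 < C ∧ ∀ f : Euc n → ℝ, Integrable f volume →
      wnorm n q (TOmegaAlpha n α Ω f) ≤ ENNReal.ofReal C * eLpNorm f 1 volume := by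
  have hαn : α < n := by
    have : (2 : ℝ) ≤ n := by exact_mod_cast hn
    linarith
  have hq0 : 0 < q := hq ▸ div_pos (by linarith) (by linarith)
  obtain ⟨M, hM⟩ := exists_abs_le_of_diniCondition (by omega) hq0
    (hΩ (α / 2) (half_pos hα0) (half_lt_self hα0))
  obtain ⟨C, hC, hweak⟩ :=
    rieszPotential_weakType (volume : Measure (Euc n)) hα0 (by simpa using hαn)
  simp only [finrank_euclideanSpace_fin, ← hq] at hweak
  refine ⟨(C * ENNReal.ofReal M).toReal + 1, by positivity, fun f hf => ?_⟩
  have hL : ∫⁻ y, ENNReal.ofReal M * ‖f y‖ₑ = ENNReal.ofReal M * eLpNorm f 1 volume := by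
    rw [lintegral_const_mul'' _ hf.1.enorm, eLpNorm_one_eq_lintegral_enorm]
  have hLtop : ∫⁻ y, ENNReal.ofReal M * ‖f y‖ₑ ≠ ∞ := by
    rw [hL]
    exact ENNReal.mul_ne_top ENNReal.ofReal_ne_top (memLp_one_iff_integrable.2 hf).eLpNorm_ne_top
  calc wnorm n q (TOmegaAlpha n α Ω f)
      ≤ wnormE n q (rieszPotential volume α fun y => ENNReal.ofReal M * ‖f y‖ₑ) :=
        wnorm_le_wnormE hq0.le (enorm_tOmegaAlpha_le hαn.ne hM f)
    _ ≤ C * (ENNReal.ofReal M * eLpNorm f 1 volume) :=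
        hL ▸ iSup_le (hweak _ (hf.1.enorm.const_mul _) hLtop)
    _ ≤ ENNReal.ofReal ((C * ENNReal.ofReal M).toReal + 1) * eLpNorm f 1 volume := by
        rw [← mul_assoc]
        gcongr
        rw [← ENNReal.ofReal_toReal (ENNReal.mul_ne_top hC ENNReal.ofReal_ne_top)]
        exact ENNReal.ofReal_le_ofReal (by simp)

end
end

section
/- There exists a constant C>0 such that every f ∈ L^1(ℝ^n) belongs to the weak Hardy space WH^1(ℝ^n) and ‖f‖_{WH^1} ≤ C‖f‖_{L^1}; that is, L^1(ℝ^n) is continuously embedded in WH^1(ℝ^n). -/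
open MeasureTheory Metric Set Filter SchwartzMap
open scoped ENNReal NNReal Topology

noncomputable section


/-! Every `φ ∈ 𝒜₀` decays like `(1 + |u|)^{-(n+1)}`, so on the dyadic shell `|y - z| ≈ 2^j t`
the dilate `φ_t(y - z)` is at most `2^{-j(n+1)} t^{-n}`, while the shell has volume `≈ 2^{jn} tⁿ`
and lies in a ball around `x` of radius `≈ 2^j t`. Summing over `j` bounds the grand maximal
function pointwise by a multiple of the Hardy–Littlewood maximal function of `|f|`, which is of
weak type (1,1) by the Vitali covering lemma. -/

open Module

section MaximalFunction

variable {X : Type*} [PseudoMetricSpace X] [MeasurableSpace X]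

def maximalFunction (μ : Measure X) (g : X → ℝ≥0∞) (x : X) : ℝ≥0∞ :=
  ⨆ (r : ℝ) (_ : 0 < r), ⨍⁻ z in closedBall x r, g z ∂μ

variable [ProperSpace X] {μ : Measure X} [IsFiniteMeasureOnCompacts μ]

theorem setLIntegral_closedBall_le_mul_maximalFunction (g : X → ℝ≥0∞) (x : X) {r : ℝ}
    (hr : 0 < r) :
    ∫⁻ z in closedBall x r, g z ∂μ ≤ μ (closedBall x r) * maximalFunction μ g x := by
  rw [← measure_mul_setLAverage _ measure_closedBall_lt_top.ne]
  exact mul_le_mul_right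
    (le_iSup₂ (f := fun r (_ : 0 < r) => ⨍⁻ z in closedBall x r, g z ∂μ) r hr) _

theorem exists_lt_setLIntegral_of_lt_maximalFunction {g : X → ℝ≥0∞} {x : X} {a : ℝ≥0∞}
    (ha : a < maximalFunction μ g x) :
    ∃ r, 0 < r ∧ a * μ (closedBall x r) < ∫⁻ z in closedBall x r, g z ∂μ := by
  obtain ⟨r, har⟩ := lt_iSup_iff.1 ha
  obtain ⟨hr, har⟩ := lt_iSup_iff.1 har
  refine ⟨r, hr, ?_⟩
  rw [setLAverage_eq] at har
  exact (ENNReal.lt_div_iff_mul_lt (Or.inr (ne_top_of_lt har))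
    (Or.inl measure_closedBall_lt_top.ne)).1 har

end MaximalFunction

theorem mul_measure_lt_le_of_le_mul {α : Type*} [MeasurableSpace α] {μ : Measure α}
    {G M : α → ℝ≥0∞} {C B : ℝ≥0∞} (hC0 : C ≠ 0) (hC : C ≠ ∞) (hGM : ∀ x, G x ≤ C * M x)
    (hM : ∀ b, b * μ {x | b < M x} ≤ B) (a : ℝ≥0∞) : a * μ {x | a < G x} ≤ C * B := by
  have hsub : {x | a < G x} ⊆ {x | a / C < M x} := fun x hx =>
    (ENNReal.div_lt_iff (.inl hC0) (.inl hC)).2 (mul_comm C (M x) ▸ hx.trans_le (hGM x))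
  calc a * μ {x | a < G x} ≤ C * (a / C) * μ {x | a / C < M x} := by
        rw [ENNReal.mul_div_cancel hC0 hC]
        gcongr
    _ ≤ C * B := by
        rw [mul_assoc]
        gcongr
        exact hM _

theorem exists_lt_two_pow_and_enorm_le_of_decay {m : ℕ} {s v : ℝ} (hs : 0 ≤ s)
    (hv : (1 + s) ^ m * |v| ≤ 1) : ∃ j : ℕ, s < 2 ^ (j + 1) ∧ ‖v‖ₑ ≤ (2 ^ (j * m))⁻¹ := by
  obtain ⟨j, hjs, hsj⟩ := exists_nat_pow_near (by linarith : 1 ≤ 1 + s) one_lt_two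
  refine ⟨j, by linarith, ?_⟩
  have hpos : (0 : ℝ) < 2 ^ (j * m) := by positivity
  have hreal : |v| ≤ (2 ^ (j * m))⁻¹ := by
    rw [← mul_one (2 ^ (j * m) : ℝ)⁻¹, le_inv_mul_iff₀ hpos, pow_mul]
    calc ((2 : ℝ) ^ j) ^ m * |v| ≤ (1 + s) ^ m * |v| := by gcongr
      _ ≤ 1 := hv
  rw [Real.enorm_eq_ofReal_abs, ← ENNReal.ofReal_ofNat, ← ENNReal.ofReal_pow (by norm_num),
    ← ENNReal.ofReal_inv_of_pos hpos]
  exact ENNReal.ofReal_le_ofReal hreal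

theorem enorm_dilate_mul_le_tsum_indicator {E : Type*} [SeminormedAddCommGroup E]
    [NormedSpace ℝ E] {φ : E → ℝ} {m : ℕ} (hφ : ∀ u, (1 + ‖u‖) ^ m * |φ u| ≤ 1) {x y : E}
    {t : ℝ} (hyx : dist y x < t) (g : E → ℝ≥0∞) (z : E) :
    ‖φ (t⁻¹ • (y - z))‖ₑ * g z ≤
      ∑' j : ℕ, (2 ^ (j * m))⁻¹ * (closedBall x (2 ^ (j + 2) * t)).indicator g z := by
  have ht : 0 < t := dist_nonneg.trans_lt hyx
  obtain ⟨j, hj, hφj⟩ :=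
    exists_lt_two_pow_and_enorm_le_of_decay (norm_nonneg _) (hφ (t⁻¹ • (y - z)))
  rw [norm_smul, norm_inv, Real.norm_of_nonneg ht.le, inv_mul_lt_iff₀ ht, ← dist_eq_norm] at hj
  have hz : z ∈ closedBall x (2 ^ (j + 2) * t) := by
    have : t ≤ t * 2 ^ (j + 1) := le_mul_of_one_le_right ht.le (one_le_pow₀ one_le_two)
    rw [mem_closedBall, pow_succ]
    linarith [dist_triangle z y x, dist_comm z y]
  refine le_trans ?_ (ENNReal.le_tsum j)
  rw [indicator_of_mem hz]
  gcongr

section AddHaar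

variable {E : Type*} [NormedAddCommGroup E] [NormedSpace ℝ E] [MeasurableSpace E]
  [BorelSpace E] [FiniteDimensional ℝ E] (μ : Measure E) [μ.IsAddHaarMeasure]

theorem exists_forall_measure_closedBall_le_imp_le [Nontrivial E] {T : ℝ≥0∞} (hT : T ≠ ∞) :
    ∃ R : ℝ, ∀ x r, μ (closedBall x r) ≤ T → r ≤ R := by
  have hmono : Monotone fun N : ℕ => closedBall (0 : E) N :=
    fun _ _ h => closedBall_subset_closedBall (Nat.cast_le.2 h)
  have hsup : ⨆ N : ℕ, μ (closedBall (0 : E) N) = ∞ := by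
    rw [← hmono.measure_iUnion, iUnion_closedBall_nat, measure_univ_of_isAddLeftInvariant]
  obtain ⟨N, hN⟩ := lt_iSup_iff.1 (hsup ▸ hT.lt_top : T < ⨆ N : ℕ, μ (closedBall (0 : E) N))
  refine ⟨N, fun x r hr => le_of_not_gt fun hNr => hN.not_ge ?_⟩
  calc μ (closedBall (0 : E) N) = μ (closedBall x N) :=
        (Measure.addHaar_closedBall_center μ x _).symm
    _ ≤ μ (closedBall x r) := measure_mono (closedBall_subset_closedBall hNr.le)
    _ ≤ T := hr

theorem mul_measure_lt_maximalFunction_le [Nontrivial E] (g : E → ℝ≥0∞) (a : ℝ≥0∞) :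
    a * μ {x | a < maximalFunction μ g x} ≤ 4 ^ finrank ℝ E * ∫⁻ z, g z ∂μ := by
  set T := ∫⁻ z, g z ∂μ
  rcases eq_or_ne a 0 with rfl | ha
  · simp
  rcases eq_or_ne T ∞ with hT | hT
  · simp [hT]
  set S := {x | a < maximalFunction μ g x}
  choose! r hr hrS using fun x (hx : x ∈ S) => exists_lt_setLIntegral_of_lt_maximalFunction hx
  obtain ⟨R, hR⟩ := exists_forall_measure_closedBall_le_imp_le μ
    (ENNReal.div_lt_top hT ha).ne
  have hrR : ∀ x ∈ S, r x ≤ R := fun x hx => hR x _ <| by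
    rw [ENNReal.le_div_iff_mul_le (Or.inl ha) (Or.inr hT), mul_comm]
    exact (hrS x hx).le.trans (setLIntegral_le_lintegral _ _)
  obtain ⟨u, huS, hdisj, hcov⟩ :=
    Vitali.exists_disjoint_subfamily_covering_enlargement_closedBall S id r R hrR 4
      (by norm_num)
  have hu : u.Countable := hdisj.countable_of_nonempty_interior fun x hx => by
    simpa [interior_closedBall _ (hr x (huS hx)).ne'] using hr x (huS hx)
  have hSu : S ⊆ ⋃ x ∈ u, closedBall x (4 * r x) := fun x hx => by
    obtain ⟨b, hbu, hb⟩ := hcov x hx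
    exact mem_biUnion hbu (hb (mem_closedBall_self (hr x hx).le))
  calc a * μ S ≤ a * ∑' x : u, μ (closedBall x (4 * r x)) := by
        gcongr
        exact (measure_mono hSu).trans (measure_biUnion_le μ hu _)
    _ = 4 ^ finrank ℝ E * ∑' x : u, a * μ (closedBall x (r x)) := by
        rw [← ENNReal.tsum_mul_left, ← ENNReal.tsum_mul_left]
        refine tsum_congr fun x => ?_
        rw [Measure.addHaar_closedBall_mul μ _ (by norm_num) (hr x (huS x.2)).le,
          ← Measure.addHaar_closedBall_center μ x, ENNReal.ofReal_pow (by norm_num)]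
        norm_num
        ring
    _ ≤ 4 ^ finrank ℝ E * ∑' x : u, ∫⁻ z in closedBall x (r x), g z ∂μ := by
        gcongr with x
        exact (hrS x (huS x.2)).le
    _ = 4 ^ finrank ℝ E * ∫⁻ z in ⋃ x ∈ u, closedBall x (r x), g z ∂μ :=
        congrArg _ (lintegral_biUnion hu (fun _ _ => measurableSet_closedBall) hdisj g).symm
    _ ≤ 4 ^ finrank ℝ E * T := by
        gcongr
        exact setLIntegral_le_lintegral _ _

theorem lintegral_enorm_dilate_mul_le_maximalFunction {φ : E → ℝ}
    (hφ : ∀ u, (1 + ‖u‖) ^ (finrank ℝ E + 1) * |φ u| ≤ 1) {g : E → ℝ≥0∞} (hg : AEMeasurable g μ)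
    {x y : E} {t : ℝ} (hyx : dist y x < t) :
    ∫⁻ z, ‖φ (t⁻¹ • (y - z))‖ₑ * g z ∂μ ≤
      2 ^ (2 * finrank ℝ E + 1) * μ (closedBall x t) * maximalFunction μ g x := by
  set d := finrank ℝ E
  set M := maximalFunction μ g x
  have ht : 0 < t := dist_nonneg.trans_lt hyx
  have hball : ∀ j : ℕ,
      μ (closedBall x (2 ^ (j + 2) * t)) = 2 ^ ((j + 2) * d) * μ (closedBall x t) := by
    intro j
    rw [Measure.addHaar_closedBall_mul μ x (by positivity) ht.le,
      Measure.addHaar_closedBall_center μ x, ENNReal.ofReal_pow (by positivity), pow_mul]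
    norm_num
    rfl
  have hcoef : ∀ j : ℕ,
      ((2 : ℝ≥0∞) ^ (j * (d + 1)))⁻¹ * 2 ^ ((j + 2) * d) = 2 ^ (2 * d) * 2⁻¹ ^ j := by
    intro j
    have h0 : (2 : ℝ≥0∞) ^ (j * d) ≠ 0 := pow_ne_zero _ two_ne_zero
    have htop : (2 : ℝ≥0∞) ^ (j * d) ≠ ∞ := ENNReal.pow_ne_top ENNReal.ofNat_ne_top
    rw [mul_add, mul_one, add_mul, pow_add, pow_add, ENNReal.mul_inv (.inl h0) (.inl htop),
      ← ENNReal.inv_pow]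
    calc ((2 : ℝ≥0∞) ^ (j * d))⁻¹ * (2 ^ j)⁻¹ * (2 ^ (j * d) * 2 ^ (2 * d))
        = ((2 : ℝ≥0∞) ^ (j * d))⁻¹ * 2 ^ (j * d) * (2 ^ (2 * d) * (2 ^ j)⁻¹) := by ring
      _ = 2 ^ (2 * d) * (2 ^ j)⁻¹ := by rw [ENNReal.inv_mul_cancel h0 htop, one_mul]
  calc ∫⁻ z, ‖φ (t⁻¹ • (y - z))‖ₑ * g z ∂μ
      ≤ ∫⁻ z, ∑' j : ℕ, (2 ^ (j * (d + 1)))⁻¹ *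
          (closedBall x (2 ^ (j + 2) * t)).indicator g z ∂μ :=
        lintegral_mono (enorm_dilate_mul_le_tsum_indicator hφ hyx g)
    _ = ∑' j : ℕ, (2 ^ (j * (d + 1)))⁻¹ * ∫⁻ z in closedBall x (2 ^ (j + 2) * t), g z ∂μ := by
        rw [lintegral_tsum fun j => (hg.indicator measurableSet_closedBall).const_mul _]
        refine tsum_congr fun j => ?_
        rw [lintegral_const_mul'' _ (hg.indicator measurableSet_closedBall),
          lintegral_indicator measurableSet_closedBall]
    _ ≤ ∑' j : ℕ, (2 ^ (j * (d + 1)))⁻¹ * (μ (closedBall x (2 ^ (j + 2) * t)) * M) := by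
        gcongr with j
        exact setLIntegral_closedBall_le_mul_maximalFunction g x (by positivity)
    _ = ∑' j : ℕ, 2⁻¹ ^ j * (2 ^ (2 * d) * μ (closedBall x t) * M) := by
        refine tsum_congr fun j => ?_
        rw [hball, ← mul_assoc, ← mul_assoc, hcoef]
        ring
    _ = 2 ^ (2 * d + 1) * μ (closedBall x t) * M := by
        rw [ENNReal.tsum_mul_right, ENNReal.tsum_geometric, ENNReal.one_sub_inv_two, inv_inv]
        ring

end AddHaar

theorem one_add_norm_pow_mul_abs_le_of_mem_calA {n N : ℕ} {φ : SchwartzMap (Euc n) ℝ}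
    (hφ : φ ∈ calA n N) (u : Euc n) : (1 + ‖u‖) ^ (N + n + 1) * |φ u| ≤ 1 := by
  simpa using hφ u 0 (Nat.zero_le _) Fin.elim0

theorem grandMaximalF_one_le_maximalFunction {n : ℕ} {f : Euc n → ℝ} (hf : AEMeasurable f)
    (x : Euc n) :
    grandMaximalF n 1 f x ≤ 2 ^ (2 * n + 1) * volume (closedBall (0 : Euc n) 1) *
      maximalFunction volume (fun z => ‖f z‖ₑ) x := by
  refine iSup₂_le fun φ hφ => iSup_le fun ⟨t, ht⟩ => iSup_le fun ⟨y, hy⟩ => ?_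
  have hdecay : ∀ u, (1 + ‖u‖) ^ (finrank ℝ (Euc n) + 1) * |φ u| ≤ 1 := by
    simpa [Npar] using one_add_norm_pow_mul_abs_le_of_mem_calA hφ
  have hT0 : ENNReal.ofReal (t ^ n) ≠ 0 := by positivity
  calc ENNReal.ofReal |∫ z, (t ^ n)⁻¹ * φ (t⁻¹ • (y - z)) * f z|
      ≤ ∫⁻ z, ‖(t ^ n)⁻¹ * φ (t⁻¹ • (y - z)) * f z‖ₑ := by
        rw [← Real.enorm_eq_ofReal_abs]
        exact enorm_integral_le_lintegral_enorm _
    _ = (ENNReal.ofReal (t ^ n))⁻¹ * ∫⁻ z, ‖φ (t⁻¹ • (y - z))‖ₑ * ‖f z‖ₑ := by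
        rw [← lintegral_const_mul' _ _ (ENNReal.inv_ne_top.2 hT0)]
        refine lintegral_congr fun z => ?_
        rw [enorm_mul, enorm_mul, mul_assoc, Real.enorm_eq_ofReal_abs,
          abs_of_pos (inv_pos.2 (pow_pos ht n)), ENNReal.ofReal_inv_of_pos (pow_pos ht n)]
    _ ≤ (ENNReal.ofReal (t ^ n))⁻¹ * (2 ^ (2 * n + 1) * volume (closedBall x t) *
          maximalFunction volume (fun z => ‖f z‖ₑ) x) := by
        gcongr
        simpa using lintegral_enorm_dilate_mul_le_maximalFunction volume hdecay hf.enorm hy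
    _ = 2 ^ (2 * n + 1) * volume (closedBall (0 : Euc n) 1) *
          maximalFunction volume (fun z => ‖f z‖ₑ) x := by
        rw [Measure.addHaar_closedBall' volume x ht.le, finrank_euclideanSpace_fin]
        calc _ = (ENNReal.ofReal (t ^ n))⁻¹ * ENNReal.ofReal (t ^ n) *
              (2 ^ (2 * n + 1) * volume (closedBall (0 : Euc n) 1) *
                maximalFunction volume (fun z => ‖f z‖ₑ) x) := by ring
          _ = _ := by rw [ENNReal.inv_mul_cancel hT0 ENNReal.ofReal_ne_top, one_mul]

/-- **`L^1(ℝ^n)` embeds continuously in `WH^1(ℝ^n)`:** every `f ∈ L^1` lies in the weak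
Hardy space `WH^1` and `‖f‖_{WH^1} ≤ C ‖f‖_{L^1}`. -/
theorem L1_embeds_weak_hardy
    (n : ℕ) (hn : 1 ≤ n) :
    ∃ C : ℝ, 0 < C ∧ ∀ f : Euc n → ℝ, Integrable f volume →
      whnormF n 1 f ≤ ENNReal.ofReal C * eLpNorm f 1 volume := by
  have : NeZero n := ⟨by omega⟩
  set V := volume (closedBall (0 : Euc n) 1)
  have hV0 : V ≠ 0 := (measure_closedBall_pos volume 0 one_pos).ne'
  have hV : V ≠ ∞ := measure_closedBall_lt_top.ne
  set K : ℝ≥0∞ := 2 ^ (2 * n + 1) * V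
  have hK0 : K ≠ 0 := mul_ne_zero (pow_ne_zero _ two_ne_zero) hV0
  have hK : K ≠ ∞ := ENNReal.mul_ne_top (ENNReal.pow_ne_top ENNReal.ofNat_ne_top) hV
  refine ⟨(K * 4 ^ n).toReal, ENNReal.toReal_pos (mul_ne_zero hK0 (by positivity))
    (ENNReal.mul_ne_top hK (ENNReal.pow_ne_top ENNReal.ofNat_ne_top)), fun f hf => ?_⟩
  rw [ENNReal.ofReal_toReal (ENNReal.mul_ne_top hK (ENNReal.pow_ne_top ENNReal.ofNat_ne_top)),
    eLpNorm_one_eq_lintegral_enorm, mul_assoc]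
  refine iSup_le fun a => ?_
  rw [div_one, ENNReal.rpow_one]
  simpa using mul_measure_lt_le_of_le_mul hK0 hK
    (grandMaximalF_one_le_maximalFunction hf.aemeasurable)
    (mul_measure_lt_maximalFunction_le volume _) a

end
end
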